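/- Let p be an odd prime, n a positive integer with ν := ν_p(n), and t a positive integer. For every integer i with max{−ν, −t} ≤ i ≤ t and i ≡ t (mod 2), one has c_{p,t,i}(n) = C(t, (t−i)/2) − Σ_{t'} ĉ_{p,t',−ν−1}(n) · C(t − t', (t−i)/2 − (t'+ν+1)/2), where the sum runs over integers t' with 1 ≤ t' ≤ t and t' ≡ ν + 1 (mod 2), and C denotes the binomial coefficient (equal to 0 when its lower entry is negative or exceeds its upper entry). -/
import Mathlib


/-- The coefficients `c_{p,t,i}(n)`, depending only on `ν := ν_p(n)`. -/
def crec (ν : ℕ) : ℕ → ℤ → ℤ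
  | 0, i => if i = 0 then 1 else 0
  | t + 1, i =>
    if ((t : ℤ) + 1 < i) ∨ (i < max (-(ν : ℤ)) (-((t : ℤ) + 1))) then 0
    else crec ν t (i - 1) + crec ν t (i + 1)

/-- The binomial coefficient `C(a, b)` for integer arguments, equal to `0` when the
lower entry is negative or exceeds the upper entry. -/
def chooseZ (a b : ℤ) : ℤ :=
  if 0 ≤ b ∧ b ≤ a then ((a.toNat).choose b.toNat : ℤ) else 0

/-- `ĉ_{p,t,−ν−1}(n) := c_{p,t−1,−ν}(n) + c_{p,t−1,−ν−2}(n)` (for `t ≥ 1`). -/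
def chat (ν t : ℕ) : ℤ := crec ν (t - 1) (-(ν : ℤ)) + crec ν (t - 1) (-(ν : ℤ) - 2)

lemma chooseZ_zero_left (b : ℤ) : chooseZ 0 b = if b = 0 then 1 else 0 := by
  unfold chooseZ
  by_cases hb : b = 0
  · subst hb; norm_num
  · rw [if_neg (by omega), if_neg hb]

lemma chooseZ_pascal (n : ℕ) (b : ℤ) :
    chooseZ ((n : ℤ) + 1) b = chooseZ n b + chooseZ n (b - 1) := by
  unfold chooseZ
  rcases lt_or_ge b 0 with hb | hb
  · rw [if_neg (by omega), if_neg (by omega), if_neg (by omega)]; ring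
  · obtain ⟨m, rfl⟩ := Int.eq_ofNat_of_zero_le hb
    rcases Nat.eq_zero_or_pos m with rfl | hm
    · rw [if_pos (by omega), if_pos (by omega), if_neg (by omega)]
      norm_num
    · obtain ⟨m', rfl⟩ : ∃ m', m = m' + 1 := ⟨m - 1, (Nat.succ_pred_eq_of_pos hm).symm⟩
      have e1 : ((n : ℤ) + 1).toNat = n + 1 := by omega
      have e2 : ((m' + 1 : ℕ) : ℤ).toNat = m' + 1 := by omega
      have e3 : (((m' + 1 : ℕ) : ℤ) - 1).toNat = m' := by omega
      have e4 : ((n : ℤ)).toNat = n := by omega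
      rcases le_or_gt (m' + 1) n with h | h
      · rw [if_pos (by omega), if_pos (by omega), if_pos (by omega), e1, e2, e3, e4]
        rw [Nat.choose_succ_succ]
        push_cast; ring
      · rcases eq_or_lt_of_le (Nat.lt_succ_iff.mp h) with h' | h'
        · subst h'
          rw [if_pos (by omega), if_neg (by omega), if_pos (by omega), e1, e2, e3, e4]
          simp [Nat.choose_self]
        · rw [if_neg (by omega), if_neg (by omega), if_neg (by omega)]; ring

lemma crec_zero_of (ν t : ℕ) (j : ℤ)
    (h : (t : ℤ) < j ∨ j < -(ν : ℤ) ∨ j < -(t : ℤ)) : crec ν t j = 0 := by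
  cases t with
  | zero => rw [crec, if_neg (by omega)]
  | succ t =>
    rw [crec, if_pos]
    rw [lt_max_iff]
    push_cast at h
    omega

lemma crec_succ (ν t : ℕ) (i : ℤ)
    (h : ¬(((t : ℤ) + 1 < i) ∨ (i < max (-(ν : ℤ)) (-((t : ℤ) + 1))))) :
    crec ν (t + 1) i = crec ν t (i - 1) + crec ν t (i + 1) := by
  rw [crec, if_neg h]

lemma chat_succ (ν t : ℕ) : chat ν (t + 1) = crec ν t (-(ν : ℤ)) := by
  unfold chat
  simp only [Nat.add_sub_cancel]
  rw [crec_zero_of ν t (-(ν:ℤ) - 2) (by omega)]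
  ring

def F (ν t : ℕ) (i : ℤ) : ℤ :=
  chooseZ (t : ℤ) (((t : ℤ) - i) / 2) -
    ∑ t' ∈ (Finset.Icc 1 t).filter (fun t' => t' % 2 = (ν + 1) % 2),
      chat ν t' *
        chooseZ ((t : ℤ) - (t' : ℤ))
          ((((t : ℤ) - i) / 2) - (((t' : ℤ) + (ν : ℤ) + 1) / 2))

lemma F_succ (ν t : ℕ) (i : ℤ) (hpar : (2 : ℤ) ∣ ((t : ℤ) + 1 - i)) :
    F ν (t + 1) i = F ν t (i - 1) + F ν t (i + 1) -
      (if (t + 1) % 2 = (ν + 1) % 2 ∧ i = -(ν : ℤ) - 1 then chat ν (t + 1) else 0) := by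
  obtain ⟨m, hm⟩ := hpar
  unfold F
  have h1 : (((t + 1 : ℕ) : ℤ) - i) / 2 = m := by push_cast; omega
  have h2 : ((t : ℤ) - (i - 1)) / 2 = m := by omega
  have h3 : ((t : ℤ) - (i + 1)) / 2 = m - 1 := by omega
  rw [h1, h2, h3]
  have hins : Finset.Icc 1 (t + 1) = insert (t + 1) (Finset.Icc 1 t) := by
    rw [← Finset.insert_Icc_right_eq_Icc_add_one (by omega)]
  rw [hins, Finset.filter_insert]
  have hmain : chooseZ ((t + 1 : ℕ) : ℤ) m = chooseZ (t : ℤ) m + chooseZ (t : ℤ) (m - 1) := by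
    push_cast
    exact chooseZ_pascal t m
  have hsum :
      ∑ t' ∈ (Finset.Icc 1 t).filter (fun t' => t' % 2 = (ν + 1) % 2),
        chat ν t' * chooseZ (((t + 1 : ℕ) : ℤ) - (t' : ℤ)) (m - (((t' : ℤ) + (ν : ℤ) + 1) / 2))
      = (∑ t' ∈ (Finset.Icc 1 t).filter (fun t' => t' % 2 = (ν + 1) % 2),
          chat ν t' * chooseZ ((t : ℤ) - (t' : ℤ)) (m - (((t' : ℤ) + (ν : ℤ) + 1) / 2)))
        + ∑ t' ∈ (Finset.Icc 1 t).filter (fun t' => t' % 2 = (ν + 1) % 2),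
          chat ν t' * chooseZ ((t : ℤ) - (t' : ℤ)) ((m - 1) - (((t' : ℤ) + (ν : ℤ) + 1) / 2)) := by
    rw [← Finset.sum_add_distrib]
    apply Finset.sum_congr rfl
    intro t' ht'
    have ht'le : t' ≤ t := by
      simp only [Finset.mem_filter, Finset.mem_Icc] at ht'; omega
    have hc : ((t + 1 : ℕ) : ℤ) - (t' : ℤ) = ((t - t' : ℕ) : ℤ) + 1 := by
      push_cast [Nat.cast_sub ht'le]; ring
    have hc2 : ((t : ℤ) - (t' : ℤ)) = ((t - t' : ℕ) : ℤ) := by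
      push_cast [Nat.cast_sub ht'le]; ring
    rw [hc, hc2, chooseZ_pascal]
    rw [mul_add]
    congr 2
    ring_nf
  by_cases hP : (t + 1) % 2 = (ν + 1) % 2
  · rw [if_pos hP, Finset.sum_insert (by simp)]
    have hpar2 : (2 : ℤ) ∣ ((t : ℤ) + 1 + (ν : ℤ) + 1) := by omega
    obtain ⟨s, hs⟩ := hpar2
    have h4 : (((t + 1 : ℕ) : ℤ) + (ν : ℤ) + 1) / 2 = s := by push_cast; omega
    have h5 : ((t + 1 : ℕ) : ℤ) - ((t + 1 : ℕ) : ℤ) = 0 := by ring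
    rw [h4, h5, chooseZ_zero_left, hsum, hmain]
    by_cases hi : i = -(ν : ℤ) - 1
    · rw [if_pos (show m - s = 0 by omega), if_pos (show (t + 1) % 2 = (ν + 1) % 2 ∧ i = -(ν : ℤ) - 1 from ⟨hP, hi⟩)]
      ring
    · rw [if_neg (show ¬(m - s = 0) by omega), if_neg (show ¬((t + 1) % 2 = (ν + 1) % 2 ∧ i = -(ν : ℤ) - 1) from fun h => hi h.2)]
      ring
  · rw [if_neg hP, if_neg (show ¬((t + 1) % 2 = (ν + 1) % 2 ∧ i = -(ν : ℤ) - 1) from fun h => hP h.1), hsum, hmain]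
    ring

lemma main_ind (ν t : ℕ) :
    (∀ i : ℤ, -(ν : ℤ) ≤ i → (2 : ℤ) ∣ ((t : ℤ) - i) → crec ν t i = F ν t i) ∧
    (∀ i : ℤ, i ≤ -(ν : ℤ) - 1 → (2 : ℤ) ∣ ((t : ℤ) - i) → F ν t i = 0) := by
  induction t with
  | zero =>
    constructor
    · intro i _ hpar
      obtain ⟨m, hm⟩ := hpar
      push_cast at hm
      unfold F
      rw [show Finset.Icc 1 0 = (∅ : Finset ℕ) from by simp, Finset.filter_empty,
        Finset.sum_empty, sub_zero]
      rw [show (((0 : ℕ) : ℤ) - i) / 2 = m from by push_cast; omega]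
      rw [show ((0 : ℕ) : ℤ) = 0 from by norm_num, chooseZ_zero_left, crec]
      by_cases hi : i = 0
      · rw [if_pos hi, if_pos (by omega)]
      · rw [if_neg hi, if_neg (by omega)]
    · intro i hi hpar
      obtain ⟨m, hm⟩ := hpar
      push_cast at hm
      unfold F
      rw [show Finset.Icc 1 0 = (∅ : Finset ℕ) from by simp, Finset.filter_empty,
        Finset.sum_empty, sub_zero]
      rw [show (((0 : ℕ) : ℤ) - i) / 2 = m from by push_cast; omega]
      rw [show ((0 : ℕ) : ℤ) = 0 from by norm_num, chooseZ_zero_left, if_neg (by omega)]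
  | succ t ih =>
    obtain ⟨ihA, ihB⟩ := ih
    have hcast : ((t + 1 : ℕ) : ℤ) = (t : ℤ) + 1 := by push_cast; ring
    constructor
    · intro i hi hpar
      rw [hcast] at hpar
      have hF := F_succ ν t i hpar
      have hextra : (if (t + 1) % 2 = (ν + 1) % 2 ∧ i = -(ν : ℤ) - 1 then chat ν (t + 1) else 0)
          = 0 := by
        rw [if_neg (fun h => by omega)]
      rw [hextra, sub_zero] at hF
      rw [hF]
      by_cases hrange : ((t : ℤ) + 1 < i) ∨ (i < max (-(ν : ℤ)) (-((t : ℤ) + 1)))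
      · rw [crec_zero_of ν (t + 1) i (by rw [lt_max_iff] at hrange; push_cast; omega)]
        rcases hrange with hr | hr
        · -- i > t + 1
          rw [← ihA (i - 1) (by omega) (by omega), ← ihA (i + 1) (by omega) (by omega)]
          rw [crec_zero_of ν t (i - 1) (by omega), crec_zero_of ν t (i + 1) (by omega)]
          ring
        · rw [lt_max_iff] at hr
          -- i < -(t+1), and i ≥ -ν, so ν ≥ t + 2
          have hr' : i < -((t : ℤ) + 1) := by omega
          by_cases hieq : i = -(ν : ℤ)
          · rw [show i - 1 = -(ν : ℤ) - 1 from by omega]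
            rw [ihB (-(ν : ℤ) - 1) (by omega) (by omega)]
            rw [← ihA (i + 1) (by omega) (by omega)]
            rw [crec_zero_of ν t (i + 1) (by omega)]
            ring
          · rw [← ihA (i - 1) (by omega) (by omega), ← ihA (i + 1) (by omega) (by omega)]
            rw [crec_zero_of ν t (i - 1) (by omega), crec_zero_of ν t (i + 1) (by omega)]
            ring
      · rw [crec_succ ν t i hrange]
        rw [lt_max_iff] at hrange
        push_neg at hrange
        by_cases hieq : i = -(ν : ℤ)
        · rw [crec_zero_of ν t (i - 1) (by omega)]
          rw [show i - 1 = -(ν : ℤ) - 1 from by omega]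
          rw [ihB (-(ν : ℤ) - 1) (by omega) (by omega)]
          rw [ihA (i + 1) (by omega) (by omega)]
        · rw [ihA (i - 1) (by omega) (by omega), ihA (i + 1) (by omega) (by omega)]
    · intro i hi hpar
      rw [hcast] at hpar
      have hF := F_succ ν t i hpar
      rw [hF]
      rw [ihB (i - 1) (by omega) (by omega)]
      by_cases hieq : i = -(ν : ℤ) - 1
      · have hP : (t + 1) % 2 = (ν + 1) % 2 := by omega
        rw [if_pos ⟨hP, hieq⟩, chat_succ]
        rw [show i + 1 = -(ν : ℤ) from by omega]
        rw [← ihA (-(ν : ℤ)) (by omega) (by omega)]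
        ring
      · rw [if_neg (fun h => hieq h.2)]
        rw [ihB (i + 1) (by omega) (by omega)]
        ring

/-- Lemma 5.4: for `max{−ν, −t} ≤ i ≤ t` with `i ≡ t (mod 2)`,
`c_{p,t,i}(n) = C(t, (t−i)/2) − Σ_{t' ≤ t, t' ≡ ν+1 (2)} ĉ_{p,t',−ν−1}(n) ·
C(t − t', (t−i)/2 − (t'+ν+1)/2)`. -/
theorem stmt14 (p : ℕ) (hp : p.Prime) (hp2 : p ≠ 2) (n t : ℕ) (hn : 0 < n) (ht : 0 < t)
    (ν : ℕ) (hν : ν = padicValNat p n)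
    (i : ℤ) (hi1 : max (-(ν : ℤ)) (-(t : ℤ)) ≤ i) (hi2 : i ≤ (t : ℤ))
    (hpar : (2 : ℤ) ∣ ((t : ℤ) - i)) :
    crec ν t i =
      chooseZ (t : ℤ) (((t : ℤ) - i) / 2) -
        ∑ t' ∈ (Finset.Icc 1 t).filter (fun t' => t' % 2 = (ν + 1) % 2),
          chat ν t' *
            chooseZ ((t : ℤ) - (t' : ℤ))
              ((((t : ℤ) - i) / 2) - (((t' : ℤ) + (ν : ℤ) + 1) / 2)) := by
  exact (main_ind ν t).1 i (le_trans (le_max_left _ _) hi1) hpar
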